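/- arXiv:2110.05138 — 2 statements merged into one kernel-verified Lean document; each statement's English description precedes it below -/
import Mathlib

section
/- Noether-type factorization of a map of short exact sequences: in an abelian category, any map of short exact sequences (f', f, f'') from 0 → A → E → B → 0 to 0 → C → F → D → 0 factors through a short exact sequence 0 → C → Z → B → 0, where Z is the pushout of E ← A → C, the map E → Z makes the left square a pushout, and Z → F makes the right square (with B → D) a pullback. -/
/-!
Let `Z` be the pushout of `E ← A → C`. Pushing a short exact sequence out along its first map
gives again a short exact sequence, here `0 → C → Z → B → 0`, and the universal property of `Z`
gives `Z → F`. This yields a map of short exact sequences which is the identity on `C`, and the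
right-hand square of any such map is a pullback. Both exactness facts are checked with
refinements, the pseudo-elements of an abelian category.
-/

open CategoryTheory Limits

namespace CategoryTheory

variable {C : Type*} [Category C] [Abelian C]

lemma IsPullback.of_up_to_refinements {X₁ X₂ X₃ X₄ : C} {t : X₁ ⟶ X₂} {l : X₁ ⟶ X₃}
    {r : X₂ ⟶ X₄} {b : X₃ ⟶ X₄} (sq : CommSq t l r b)
    (ext_zero : ∀ ⦃A : C⦄ (x₁ : A ⟶ X₁), x₁ ≫ t = 0 → x₁ ≫ l = 0 → x₁ = 0)
    (exists_lift : ∀ ⦃A : C⦄ (x₂ : A ⟶ X₂) (x₃ : A ⟶ X₃), x₂ ≫ r = x₃ ≫ b →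
      ∃ (A' : C) (π : A' ⟶ A) (_ : Epi π) (x₁ : A' ⟶ X₁), π ≫ x₂ = x₁ ≫ t ∧ π ≫ x₃ = x₁ ≫ l) :
    IsPullback t l r b := by
  have : Mono (pullback.lift t l sq.w) := by
    rw [Preadditive.mono_iff_cancel_zero]
    intro A x hx
    exact ext_zero x (by simpa [pullback.lift_fst] using hx =≫ pullback.fst r b)
      (by simpa [pullback.lift_snd] using hx =≫ pullback.snd r b)
  have : Epi (pullback.lift t l sq.w) := by
    rw [epi_iff_surjective_up_to_refinements]
    intro A y
    obtain ⟨A', π, _, x₁, h₂, h₃⟩ :=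
      exists_lift (y ≫ pullback.fst r b) (y ≫ pullback.snd r b) (by simp [pullback.condition])
    refine ⟨A', π, inferInstance, x₁, ?_⟩
    ext
    · rw [Category.assoc, Category.assoc, pullback.lift_fst, h₂]
    · rw [Category.assoc, Category.assoc, pullback.lift_snd, h₃]
  have := isIso_of_mono_of_epi (pullback.lift t l sq.w)
  exact .of_iso_pullback sq (asIso (pullback.lift t l sq.w))
    (pullback.lift_fst _ _ _) (pullback.lift_snd _ _ _)

namespace ShortComplex

lemma isPullback_of_isIso_τ₁ {S T : ShortComplex C} (ψ : S ⟶ T) (hS : S.Exact) [Epi S.g]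
    (hT : T.Exact) [Mono T.f] [IsIso ψ.τ₁] : IsPullback ψ.τ₂ S.g T.g ψ.τ₃ := by
  refine IsPullback.of_up_to_refinements ⟨ψ.comm₂₃⟩ ?_ ?_
  · intro A x h₂ h₃
    obtain ⟨A', π, _, x₁, hx₁⟩ := hS.exact_up_to_refinements x h₃
    have : x₁ ≫ ψ.τ₁ ≫ T.f = 0 := by
      rw [ψ.comm₁₂, ← Category.assoc, ← hx₁, Category.assoc, h₂, comp_zero]
    rw [← cancel_epi π, hx₁, zero_of_comp_mono (ψ.τ₁ ≫ T.f) this, zero_comp, comp_zero]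
  · intro A x₂ x₃ hx
    obtain ⟨A₁, π₁, _, y, hy⟩ := surjective_up_to_refinements_of_epi S.g x₃
    obtain ⟨A₂, π₂, _, z, hz⟩ := hT.exact_up_to_refinements (π₁ ≫ x₂ - y ≫ ψ.τ₂) (by
      rw [Preadditive.sub_comp, Category.assoc, Category.assoc, hx, reassoc_of% hy, ψ.comm₂₃,
        sub_self])
    refine ⟨A₂, π₂ ≫ π₁, inferInstance, π₂ ≫ y + z ≫ inv ψ.τ₁ ≫ S.f, ?_, ?_⟩
    · have : z ≫ inv ψ.τ₁ ≫ S.f ≫ ψ.τ₂ = z ≫ T.f := by simp [← ψ.comm₁₂]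
      simp only [Preadditive.add_comp, Category.assoc, this, ← hz, Preadditive.comp_sub]
      abel
    · simp [hy]

lemma ShortExact.cobaseChange {S : ShortComplex C} (hS : S.ShortExact) {Y Z : C}
    {a : S.X₁ ⟶ Y} {g : S.X₂ ⟶ Z} {j : Y ⟶ Z} (sq : IsPushout S.f a g j) :
    (ShortComplex.mk j (sq.desc S.g 0 (by simp)) (by simp)).ShortExact := by
  have := hS.mono_f
  have := hS.epi_g
  have : Mono j := Abelian.mono_inr_of_isColimit _ _ sq.isColimit
  have : Epi (sq.desc S.g 0 (by simp)) := epi_of_epi_fac (sq.inl_desc _ _ _)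
  refine .mk' ?_ inferInstance inferInstance
  rw [exact_iff_exact_up_to_refinements]
  intro A x hx
  obtain ⟨A₁, π₁, _, x₂, y, hx'⟩ := sq.hom_eq_add_up_to_refinements x
  obtain ⟨A₂, π₂, _, x₁, hx₁⟩ := hS.exact.exact_up_to_refinements x₂ (by
    simpa [hx] using (hx' =≫ sq.desc S.g 0 (by simp)).symm)
  refine ⟨A₂, π₂ ≫ π₁, inferInstance, x₁ ≫ a + π₂ ≫ y, ?_⟩
  simp [hx', reassoc_of% hx₁, sq.w]

end ShortComplex

end CategoryTheory

/-- Noether-type factorization of a map of short exact sequences: any map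
`φ : S₁ ⟶ S₂` of short exact sequences `0 → A → E → B → 0` and
`0 → C → F → D → 0` factors through a short exact sequence `0 → C → Z → B → 0`,
where `Z` is the pushout of `E ← A → C`, the left square is a pushout and the
right square (with `B → D`) is a pullback. -/
theorem stmt_4 {𝒞 : Type*} [Category 𝒞] [Abelian 𝒞]
    (S₁ S₂ : ShortComplex 𝒞) (hS₁ : S₁.ShortExact) (hS₂ : S₂.ShortExact)
    (φ : S₁ ⟶ S₂) :
    ∃ (Z : 𝒞) (j : S₂.X₁ ⟶ Z) (q : Z ⟶ S₁.X₃) (w : j ≫ q = 0)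
      (g : S₁.X₂ ⟶ Z) (h : Z ⟶ S₂.X₂),
      (ShortComplex.mk j q w).ShortExact ∧
      IsPushout S₁.f φ.τ₁ g j ∧
      IsPullback h q S₂.g φ.τ₃ ∧
      g ≫ q = S₁.g ∧
      j ≫ h = S₂.f ∧
      g ≫ h = φ.τ₂ := by
  let sq := IsPushout.of_hasPushout S₁.f φ.τ₁
  let T := ShortComplex.mk (pushout.inr S₁.f φ.τ₁) (sq.desc S₁.g 0 (by simp)) (by simp)
  have hT : T.ShortExact := hS₁.cobaseChange sq
  have := hT.epi_g
  have := hS₂.mono_f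
  let ψ : T ⟶ S₂ :=
    { τ₁ := 𝟙 _
      τ₂ := sq.desc φ.τ₂ S₂.f φ.comm₁₂.symm
      τ₃ := φ.τ₃
      comm₁₂ := by simp [T]
      comm₂₃ := sq.hom_ext (by simp [T, φ.comm₂₃]) (by simp [T]) }
  exact ⟨_, _, _, _, _, ψ.τ₂, hT, sq, ShortComplex.isPullback_of_isIso_τ₁ ψ hT.exact hS₂.exact,
    sq.inl_desc _ _ _, sq.inr_desc _ _ _, sq.inl_desc _ _ _⟩
end

section
/- Mapping cylinder factorization for short exact sequences in an abelian category (length-2 case of the extension factorization): given a map of 2-extensions, i.e., a commutative diagram of exact sequences 0 → A → E₁ → E₂ → B → 0 and 0 → A → F₁ → F₂ → B → 0 with identity on A and B and vertical maps f₁, f₂, there exists a 2-extension cyl(f): 0 → A → F₁ ⊕ E₂ → F₂ ⊕ E₂ → B → 0 and maps E• → cyl(f) → F• of 2-extensions (over the identity on A and B) whose composite is the given map, such that each component of E• → cyl(f) is a monomorphism, and cyl(f) → F• admits a section whose components are monomorphisms. -/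
open CategoryTheory CategoryTheory.Limits

variable {𝒞 : Type*} [Category 𝒞] [Abelian 𝒞]

/-- Exactness of a four-term sequence `0 → A → E₁ → E₂ → B → 0`:
the first map is mono, the last is epi, and the sequence is (kernel-cokernel)
exact at `E₁` and at `E₂`. -/
def IsTwoExtension {A E₁ E₂ B : 𝒞} (d₀ : A ⟶ E₁) (d₁ : E₁ ⟶ E₂) (d₂ : E₂ ⟶ B) : Prop :=
  Mono d₀ ∧ Epi d₂ ∧
  ∃ (w₁ : d₀ ≫ d₁ = 0) (w₂ : d₁ ≫ d₂ = 0),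
    (ShortComplex.mk d₀ d₁ w₁).Exact ∧ (ShortComplex.mk d₁ d₂ w₂).Exact

/-- Mapping cylinder factorization for 2-extensions: a map of 2-extensions
`(𝟙 A, f₁, f₂, 𝟙 B)` factors through the 2-extension
`0 → A → F₁ ⊕ E₂ → F₂ ⊕ E₂ → B → 0` via a map with monomorphism components,
followed by a projection which admits a section with monomorphism components. -/
theorem stmt_19 {A B E₁ E₂ F₁ F₂ : 𝒞}
    (d₀E : A ⟶ E₁) (d₁E : E₁ ⟶ E₂) (d₂E : E₂ ⟶ B)
    (d₀F : A ⟶ F₁) (d₁F : F₁ ⟶ F₂) (d₂F : F₂ ⟶ B)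
    (hE : IsTwoExtension d₀E d₁E d₂E) (hF : IsTwoExtension d₀F d₁F d₂F)
    (f₁ : E₁ ⟶ F₁) (f₂ : E₂ ⟶ F₂)
    (hf₀ : d₀E ≫ f₁ = d₀F) (hf₁ : f₁ ≫ d₁F = d₁E ≫ f₂) (hf₂ : f₂ ≫ d₂F = d₂E) :
    ∃ (c₀ : A ⟶ F₁ ⊞ E₂) (c₁ : F₁ ⊞ E₂ ⟶ F₂ ⊞ E₂) (c₂ : F₂ ⊞ E₂ ⟶ B),
      IsTwoExtension c₀ c₁ c₂ ∧
      -- the map E• → cyl(f), with monomorphism components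
      ∃ (g₁ : E₁ ⟶ F₁ ⊞ E₂) (g₂ : E₂ ⟶ F₂ ⊞ E₂),
        d₀E ≫ g₁ = c₀ ∧ g₁ ≫ c₁ = d₁E ≫ g₂ ∧ g₂ ≫ c₂ = d₂E ∧
        Mono g₁ ∧ Mono g₂ ∧
        -- the projection cyl(f) → F•
        ∃ (p₁ : F₁ ⊞ E₂ ⟶ F₁) (p₂ : F₂ ⊞ E₂ ⟶ F₂),
          c₀ ≫ p₁ = d₀F ∧ p₁ ≫ d₁F = c₁ ≫ p₂ ∧ p₂ ≫ d₂F = c₂ ∧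
          -- the composite is the given map
          g₁ ≫ p₁ = f₁ ∧ g₂ ≫ p₂ = f₂ ∧
          -- a section of the projection, with monomorphism components
          ∃ (m₁ : F₁ ⟶ F₁ ⊞ E₂) (m₂ : F₂ ⟶ F₂ ⊞ E₂),
            d₀F ≫ m₁ = c₀ ∧ m₁ ≫ c₁ = d₁F ≫ m₂ ∧ m₂ ≫ c₂ = d₂F ∧
            m₁ ≫ p₁ = 𝟙 F₁ ∧ m₂ ≫ p₂ = 𝟙 F₂ ∧
            Mono m₁ ∧ Mono m₂ := by
  obtain ⟨hmE, hepE, wE₁, wE₂, exE₁, exE₂⟩ := hE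
  obtain ⟨hmF, hepF, wF₁, wF₂, exF₁, exF₂⟩ := hF
  refine ⟨biprod.lift d₀F 0, biprod.map d₁F (𝟙 E₂), biprod.desc d₂F 0, ?_,
    biprod.lift f₁ d₁E, biprod.lift f₂ (𝟙 E₂), ?_, ?_, ?_, ?_, ?_,
    biprod.fst, biprod.fst, ?_, ?_, ?_, ?_, ?_,
    biprod.inl, biprod.inl, ?_, ?_, ?_, ?_, ?_, ?_, ?_⟩
  · refine ⟨?_, ?_, ?_, ?_, ?_, ?_⟩
    · exact mono_of_mono_fac (show biprod.lift d₀F 0 ≫ biprod.fst = d₀F by simp)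
    · have : Epi (biprod.inl ≫ biprod.desc d₂F (0 : E₂ ⟶ B)) := by
        simpa using hepF
      exact epi_of_epi biprod.inl _
    · apply biprod.hom_ext <;> simp [wF₁]
    · apply biprod.hom_ext' <;> simp [wF₂]
    · rw [ShortComplex.exact_iff_exact_up_to_refinements]
      intro X x hx
      have hx1 : (x ≫ biprod.fst) ≫ d₁F = 0 := by
        have := hx =≫ biprod.fst; simpa using this
      have hx2 : x ≫ biprod.snd = 0 := by
        have := hx =≫ biprod.snd; simpa using this
      obtain ⟨X', π, hπ, y, hy⟩ := exF₁.exact_up_to_refinements (x ≫ biprod.fst) hx1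
      refine ⟨X', π, hπ, y, ?_⟩
      apply biprod.hom_ext
      · simpa using hy
      · have := π ≫= hx2
        simpa using this
    · rw [ShortComplex.exact_iff_exact_up_to_refinements]
      intro X x hx
      have hdesc : biprod.desc d₂F (0 : E₂ ⟶ B) = biprod.fst ≫ d₂F := by
        apply biprod.hom_ext' <;> simp
      have hx1 : (x ≫ biprod.fst) ≫ d₂F = 0 := by
        have := hx
        simp only [hdesc] at this
        simpa using this
      obtain ⟨X', π, hπ, y, hy⟩ := exF₂.exact_up_to_refinements (x ≫ biprod.fst) hx1
      refine ⟨X', π, hπ, biprod.lift y (π ≫ x ≫ biprod.snd), ?_⟩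
      apply biprod.hom_ext
      · simpa using hy
      · simp
  · apply biprod.hom_ext <;> simp [hf₀, wE₁]
  · apply biprod.hom_ext <;> simp [hf₁]
  · simp [hf₂]
  · rw [Preadditive.mono_iff_cancel_zero]
    intro X x hx
    have hx1 : x ≫ f₁ = 0 := by
      have := hx =≫ biprod.fst; simpa using this
    have hx2 : x ≫ d₁E = 0 := by
      have := hx =≫ biprod.snd; simpa using this
    obtain ⟨X', π, hπ, y, hy⟩ := exE₁.exact_up_to_refinements x hx2
    have : y ≫ d₀F = 0 := by
      rw [← hf₀, ← Category.assoc, ← hy, Category.assoc, hx1, comp_zero]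
    have hy0 : y = 0 := zero_of_comp_mono d₀F this
    rw [hy0, zero_comp] at hy
    exact (cancel_epi π).mp (by simpa using hy)
  · exact mono_of_mono_fac (show biprod.lift f₂ (𝟙 E₂) ≫ biprod.snd = 𝟙 E₂ by simp)
  · simp
  · apply biprod.hom_ext' <;> simp
  · apply biprod.hom_ext' <;> simp
  · simp
  · simp
  · apply biprod.hom_ext <;> simp
  · apply biprod.hom_ext <;> simp
  · simp
  · simp
  · simp
  · infer_instance
  · infer_instance
end
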